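/- arXiv:math/0011187 — 2 statements merged into one kernel-verified Lean document; each statement's English description precedes it below -/
import Mathlib

section
/- Let X be an elementary substructure of (H(χ), ∈, ≤_χ), let λ < γ be ordinals in X with γ a regular cardinal, and let Y be a minimal (η, λ)-extension of X for some η < λ. Then X ∩ γ is cofinal in Y ∩ γ. -/
open ZFSet FirstOrder

namespace P746

/-! ## First-order language with membership and a wellordering predicate -/

/-- The language with two binary relation symbols: `∈` and a wellordering `<*`. -/
def L : FirstOrder.Language where
  Functions := fun _ => Empty
  Relations := fun n => match n with
    | 2 => Fin 2
    | _ => Empty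

/-- The `L`-structure on (the members of) a ZF-set `M`, interpreting the first relation
as membership and the second as a given relation `r`. -/
def mStruc (M : ZFSet) (r : ZFSet → ZFSet → Prop) : L.Structure M.toSet where
  funMap := fun f _ => f.elim
  RelMap := fun {n} => match n with
    | 0 => fun R _ => R.elim
    | 1 => fun R _ => R.elim
    | 2 => fun R v => @ite _ (R = (0 : Fin 2)) (instDecidableEqFin 2 R 0)
      ((v 0 : ZFSet) ∈ (v 1 : ZFSet)) (r (v 0) (v 1))
    | (_+3) => fun R _ => R.elim

/-- `X` is an elementary substructure of `(M, ∈, r)`: `X ⊆ M` and every first-order formula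
with parameters from `X` holds in `X` iff it holds in `M`. -/
def ElemSub (M : ZFSet) (r : ZFSet → ZFSet → Prop) (X : ZFSet) : Prop :=
  ∃ h : X ⊆ M,
    ∀ (n : ℕ) (φ : L.Formula (Fin n)) (v : Fin n → X.toSet),
      (letI := mStruc M r
       φ.Realize (fun i => (⟨(v i : ZFSet), h (v i).2⟩ : M.toSet))) ↔
      (letI := mStruc X r; φ.Realize v)

/-- `r` is a wellordering of the members of `S`. -/
def WOn (S : ZFSet) (r : ZFSet → ZFSet → Prop) : Prop :=
  IsWellOrder S.toSet (Subrel r S.toSet)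

/-! ## Basic set-theoretic notions inside `ZFSet` -/

/-- `x` is a (von Neumann) ordinal: a transitive set of transitive sets. -/
def IsOrd (x : ZFSet) : Prop :=
  x.IsTransitive ∧ ∀ y ∈ x.toSet, ZFSet.IsTransitive y

/-- `w` is the first uncountable ordinal `ω₁`. -/
def IsOmega1 (w : ZFSet) : Prop :=
  IsOrd w ∧ ¬ w.toSet.Countable ∧ ∀ y ∈ w.toSet, y.toSet.Countable

/-- The set `[x]^{<ω}` of finite subsets of `x`. -/
noncomputable def finPow (x : ZFSet) : ZFSet :=
  ZFSet.sep (fun a => a.toSet.Finite) x.powerset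

/-- The set `[x]^n` of subsets of `x` of size `n`. -/
noncomputable def finPowCard (x : ZFSet) (n : ℕ) : ZFSet :=
  ZFSet.sep (fun a => a.toSet.Finite ∧ a.toSet.ncard = n) x.powerset

/-- `D^X_η`: the set of finite `a ⊆ η` such that `f(a) ∈ X` for every
`f : [η]^{|a|} → ω₁` belonging to `X` (`w` stands for `ω₁`). -/
def Dset (w X η : ZFSet) : Set ZFSet :=
  {a | a ∈ finPow η ∧ ∀ f ∈ X.toSet, ZFSet.IsFunc (finPowCard η a.toSet.ncard) w f →
    ∀ v : ZFSet, ZFSet.pair a v ∈ f → v ∈ X}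

/-- The Skolem hull of `X ∪ z` in `M` (with functions on `[η]^{<ω}`):
`X` together with all values `f(a)` for `f : [η]^{<ω} → M` in `X` and finite `a ⊆ z`. -/
def SkHull (M η X z : ZFSet) : Set ZFSet :=
  X.toSet ∪ {y | ∃ f ∈ X.toSet, ZFSet.IsFunc (finPow η) M f ∧
    ∃ a : ZFSet, a ∈ finPow η ∧ a ⊆ z ∧ ZFSet.pair a y ∈ f}

/-- `x` is hereditarily of cardinality less than `κ`. -/
def HerLt (κ : Cardinal) (x : ZFSet) : Prop :=
  ZFSet.mem_wf.fix (C := fun _ => Prop)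
    (fun y ih => Cardinal.mk y.toSet < κ ∧ ∀ z, ∀ h : z ∈ y, ih z h) x

/-- `H` is the collection `H(κ)` of sets hereditarily of cardinality `< κ`. -/
def IsHCard (κ : Cardinal) (H : ZFSet) : Prop :=
  ∀ x : ZFSet, x ∈ H ↔ HerLt κ x

/-! ## Clubs, stationarity and canonical functions on `ω₁` -/

noncomputable def omega1 : Ordinal.{0} := (Cardinal.aleph 1).ord
noncomputable def omega2 : Ordinal.{0} := (Cardinal.aleph 2).ord

/-- `C` is a club (closed unbounded) subset of `ω₁`. -/
def IsClub (C : Set Ordinal.{0}) : Prop :=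
  C ⊆ Set.Iio omega1 ∧
  (∀ o, o < omega1 → Order.IsSuccLimit o → (∀ b, b < o → ∃ c ∈ C, b ≤ c ∧ c < o) → o ∈ C) ∧
  (∀ b, b < omega1 → ∃ c ∈ C, b < c ∧ c < omega1)

/-- `S` is a stationary subset of `ω₁`. -/
def IsStat (S : Set Ordinal.{0}) : Prop :=
  ∀ C, IsClub C → (S ∩ C).Nonempty

/-- `f ≤ g` on a club. -/
def BddOnClub (f g : Ordinal.{0} → Ordinal.{0}) : Prop :=
  ∃ C, IsClub C ∧ ∀ α ∈ C, f α ≤ g α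

/-- `f < g` on a club. -/
def LtOnClub (f g : Ordinal.{0} → Ordinal.{0}) : Prop :=
  ∃ C, IsClub C ∧ ∀ α ∈ C, f α < g α

/-- `f` is a canonical function for `γ`: it is above every canonical function for every `β < γ`
(mod clubs), and minimally so.  (This is the standard recursive characterization of the
statement that the empty condition in `P(ω₁)/NS_{ω₁}` forces `j(f)(ω₁^V) = γ`.) -/
def Canonical : Ordinal.{0} → (Ordinal.{0} → Ordinal.{0}) → Prop :=
  Ordinal.lt_wf.fix (C := fun _ => (Ordinal.{0} → Ordinal.{0}) → Prop)
    (fun γ ih f =>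
      (∀ β, ∀ hβ : β < γ, ∀ g, ih β hβ g → LtOnClub g f) ∧
      ∀ h : Ordinal.{0} → Ordinal.{0},
        (∀ β, ∀ hβ : β < γ, ∀ g, ih β hβ g → LtOnClub g h) → BddOnClub f h)

/-- Every `f : ω₁ → ω₁` is bounded on a club by a canonical function for some `γ < ω₂`. -/
def Bounding : Prop :=
  ∀ f : Ordinal.{0} → Ordinal.{0}, (∀ α, α < omega1 → f α < omega1) →
    ∃ γ, γ < omega2 ∧ ∃ g, Canonical γ g ∧ BddOnClub f g

/-- `o` is the order type of the set of ordinals `s`: there is a strictly increasing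
enumeration of `s` indexed by the ordinals below `o`. -/
def IsOtypOf (o : Ordinal.{0}) (s : Set Ordinal.{0}) : Prop :=
  ∃ e : Ordinal.{0} → Ordinal.{0},
    (∀ i j, i < j → j < o → e i < e j) ∧
    (∀ i, i < o → e i ∈ s) ∧ ∀ x ∈ s, ∃ i, i < o ∧ e i = x

/-! ## Trees on `ω × ω` and `ω × Ord` (as sets of pairs of lists) -/

def IsTreeN (S : Set (List ℕ × List ℕ)) : Prop :=
  ∀ p ∈ S, p.1.length = p.2.length ∧ ∀ n : ℕ, (p.1.take n, p.2.take n) ∈ S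

def IsTreeO (T : Set (List ℕ × List Ordinal.{0})) : Prop :=
  ∀ p ∈ T, p.1.length = p.2.length ∧ ∀ n : ℕ, (p.1.take n, p.2.take n) ∈ T

/-- Projection of a tree on `ω × ω`. -/
def projN (S : Set (List ℕ × List ℕ)) : Set (ℕ → ℕ) :=
  {x | ∃ y : ℕ → ℕ, ∀ n : ℕ,
    (List.ofFn (fun i : Fin n => x i), List.ofFn (fun i : Fin n => y i)) ∈ S}

/-- Projection of a tree on `ω × Ord`. -/
def projO (T : Set (List ℕ × List Ordinal.{0})) : Set (ℕ → ℕ) :=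
  {x | ∃ y : ℕ → Ordinal.{0}, ∀ n : ℕ,
    (List.ofFn (fun i : Fin n => x i), List.ofFn (fun i : Fin n => y i)) ∈ T}

/-- Projection of the restricted tree `T ↾ (ω × α)`. -/
def projOBelow (T : Set (List ℕ × List Ordinal.{0})) (α : Ordinal.{0}) : Set (ℕ → ℕ) :=
  {x | ∃ y : ℕ → Ordinal.{0}, (∀ i, y i < α) ∧ ∀ n : ℕ,
    (List.ofFn (fun i : Fin n => x i), List.ofFn (fun i : Fin n => y i)) ∈ T}

/-! ## Names, evaluation, and generic extensions -/

open Classical in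
/-- Evaluation of a `P`-name `τ` by a filter `G`:
`val G τ = { val G σ : ∃ p ∈ G, (σ, p) ∈ τ }`, by recursion on rank. -/
noncomputable def val (G : ZFSet) : ZFSet → ZFSet :=
  WellFounded.fix (InvImage.wf ZFSet.rank Ordinal.lt_wf)
    (fun τ ih =>
      ZFSet.sUnion <| ZFSet.sep
        (fun y => ∃ z ∈ τ.toSet,
          if h : ∃ σ, ZFSet.rank σ < ZFSet.rank τ ∧ ∃ p ∈ G.toSet, z = ZFSet.pair σ p
          then y = {ih h.choose h.choose_spec.1}
          else y = ∅)
        (ZFSet.powerset (ZFSet.sUnion (ZFSet.sUnion (ZFSet.sUnion τ)))))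

/-- The universe is a generic extension `V[G]` of the transitive class `V` by the
partial order `(P, ≤)` (with `le` the set of pairs `(p,q)` with `p ≤ q`), `G ⊆ P`
a filter meeting every dense subset of `P` lying in `V`, and every set being the
value of a `P`-name in `V`. -/
def IsGenericExt (V : Set ZFSet) (P le G : ZFSet) : Prop :=
  (∀ x ∈ V, ∀ y, y ∈ x → y ∈ V) ∧ P ∈ V ∧ le ∈ V ∧
  (∀ p, p ∈ P → ZFSet.pair p p ∈ le) ∧
  (∀ p q z, ZFSet.pair p q ∈ le → ZFSet.pair q z ∈ le → ZFSet.pair p z ∈ le) ∧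
  (∀ p q, ZFSet.pair p q ∈ le → p ∈ P ∧ q ∈ P) ∧
  G ⊆ P ∧ G ≠ ∅ ∧
  (∀ p q, p ∈ G → q ∈ G → ∃ r, r ∈ G ∧ ZFSet.pair r p ∈ le ∧ ZFSet.pair r q ∈ le) ∧
  (∀ p q, p ∈ G → q ∈ P → ZFSet.pair p q ∈ le → q ∈ G) ∧
  (∀ D, D ∈ V → D ⊆ P → (∀ p, p ∈ P → ∃ q, q ∈ D ∧ ZFSet.pair q p ∈ le) →
    ∃ q, q ∈ G ∧ q ∈ D) ∧
  (∀ x : ZFSet, ∃ τ, τ ∈ V ∧ x = val G τ)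

/-- In the generic extension, the forcing added no new `ω`-sequences of ordinals;
i.e. `P` is `(ω, ∞)`-distributive. -/
def Distributive (V : Set ZFSet) : Prop :=
  ∀ f o : ZFSet, (o.IsTransitive ∧ ∀ y ∈ o.toSet, ZFSet.IsTransitive y) →
    ZFSet.IsFunc ZFSet.omega o f → f ∈ V

/-! ## Ultrafilters and completeness -/

/-- `U` is an ultrafilter on the set `S`. -/
def IsUltraOn (S U : ZFSet) : Prop :=
  U ⊆ S.powerset ∧ S ∈ U ∧ (∅ : ZFSet) ∉ U ∧
  (∀ A B, A ∈ U → A ⊆ B → B ⊆ S → B ∈ U) ∧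
  (∀ A B, A ∈ U → B ∈ U → A ∩ B ∈ U) ∧
  (∀ A, A ⊆ S → (A ∈ U ∨ ZFSet.sep (fun x => x ∉ A) S ∈ U))

/-- `U` is `γ`-complete with respect to families of members of `U` lying in `W`. -/
def CompleteOn (W : Set ZFSet) (γ : Cardinal.{1}) (S U : ZFSet) : Prop :=
  ∀ F, F ∈ W → F ≠ ∅ → F ⊆ U → Cardinal.mk F.toSet < γ →
    ZFSet.sep (fun x => ∀ A ∈ F.toSet, x ∈ A) S ∈ U

/-! ## Internal finite sequences, trees and homogeneity -/

/-- The set `κ^{<ω}` of finite sequences from `κ` (functions `n → κ`, `n < ω`). -/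
noncomputable def seqs (κ : ZFSet) : ZFSet :=
  ZFSet.sep (fun f => ∃ n, n ∈ ZFSet.omega ∧ ZFSet.IsFunc n κ f)
    (((κ ∪ ZFSet.omega).powerset.powerset).powerset)

/-- The set of functions `a → b` as a ZF-set. -/
noncomputable def funsZ (a b : ZFSet) : ZFSet :=
  ZFSet.sep (fun f => ZFSet.IsFunc a b f) (((a ∪ b).powerset.powerset).powerset)

/-- Restriction of a (set-)function `f` to `m`. -/
noncomputable def restr (f m : ZFSet) : ZFSet :=
  ZFSet.sep (fun p => ∃ i v, i ∈ m ∧ p = ZFSet.pair i v) f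

/-- `T` is a tree on `ω × κ`: a set of pairs of finite sequences of equal length,
closed under restriction. -/
def IsTreeZ (κ T : ZFSet) : Prop :=
  ∀ z, z ∈ T → ∃ n s t, n ∈ ZFSet.omega ∧ ZFSet.IsFunc n ZFSet.omega s ∧
    ZFSet.IsFunc n κ t ∧ z = ZFSet.pair s t ∧
    ∀ m, m ∈ n → ZFSet.pair (restr s m) (restr t m) ∈ T

/-- `x ∈ p[T]`, computed in `W`: there is a branch witness `y ∈ W`. -/
def inProjZ (W : Set ZFSet) (κ T x : ZFSet) : Prop :=
  ∃ y, y ∈ W ∧ ZFSet.IsFunc ZFSet.omega κ y ∧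
    ∀ n, n ∈ ZFSet.omega → ZFSet.pair (restr x n) (restr y n) ∈ T

/-- `x ∈ p[T ↾ (ω × A)]` where the branch takes values satisfying `Q`. -/
def inProjVal (κ T x : ZFSet) (Q : ZFSet → Prop) : Prop :=
  ∃ y, ZFSet.IsFunc ZFSet.omega κ y ∧ (∀ i v, ZFSet.pair i v ∈ y → Q v) ∧
    ∀ n, n ∈ ZFSet.omega → ZFSet.pair (restr x n) (restr y n) ∈ T

/-- The tower `⟨π(x ↾ k) : k < ω⟩` is countably complete, relativized to `W`. -/
def CCTower (W : Set ZFSet) (κ π x : ZFSet) : Prop :=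
  ∀ Af, Af ∈ W → ZFSet.IsFunc ZFSet.omega ((seqs κ).powerset) Af →
    (∀ n U a, n ∈ ZFSet.omega → ZFSet.pair (restr x n) U ∈ π →
      ZFSet.pair n a ∈ Af → a ∈ U) →
    ∃ y, y ∈ W ∧ ZFSet.IsFunc ZFSet.omega κ y ∧
      ∀ n a, n ∈ ZFSet.omega → ZFSet.pair n a ∈ Af → restr y n ∈ a

/-- `(T, π)` is a `γ`-homogeneous tree system on `ω × κ`, relativized to the class `W`. -/
def HomSys (W : Set ZFSet) (γ : Cardinal.{1}) (κ T π : ZFSet) : Prop :=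
  IsTreeZ κ T ∧
  (∀ z, z ∈ π → ∃ n s U, n ∈ ZFSet.omega ∧ ZFSet.IsFunc n ZFSet.omega s ∧
    z = ZFSet.pair s U ∧ IsUltraOn (funsZ n κ) U ∧ CompleteOn W γ (funsZ n κ) U ∧
    ZFSet.sep (fun t => ZFSet.pair s t ∈ T) (funsZ n κ) ∈ U) ∧
  (∀ s U U', ZFSet.pair s U ∈ π → ZFSet.pair s U' ∈ π → U = U') ∧
  (∀ x, x ∈ W → ZFSet.IsFunc ZFSet.omega ZFSet.omega x →
    (inProjZ W κ T x ↔
      ((∀ n, n ∈ ZFSet.omega → ∃ U, ZFSet.pair (restr x n) U ∈ π) ∧ CCTower W κ π x)))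

/-- `A` is a `γ`-homogeneously Suslin set of reals, in the sense of the class `W`. -/
def HomSuslinIn (W : Set ZFSet) (γ : Cardinal.{1}) (A : ZFSet) : Prop :=
  A ⊆ funsZ ZFSet.omega ZFSet.omega ∧
  ∃ κ T π, κ ∈ W ∧ T ∈ W ∧ π ∈ W ∧
    (κ.IsTransitive ∧ ∀ y ∈ κ.toSet, ZFSet.IsTransitive y) ∧
    HomSys W γ κ T π ∧
    ∀ x, ZFSet.IsFunc ZFSet.omega ZFSet.omega x → (x ∈ A ↔ inProjZ W κ T x)


/-! ## Additional notions -/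

/-- `γ` is a regular (limit) cardinal, as a ZF-set ordinal: the range of any function
from a smaller ordinal into `γ` is bounded. -/
def IsRegOrd (γ : ZFSet) : Prop :=
  IsOrd γ ∧ (∀ o ∈ γ.toSet, ∃ o' ∈ γ.toSet, o ∈ o') ∧
  ∀ b f, b ∈ γ → ZFSet.IsFunc b γ f → ∃ o ∈ γ.toSet, ∀ x v, ZFSet.pair x v ∈ f → v ∈ o

/-- `Y` is a minimal `(η, λ)`-extension of `X` (inside the model `M` with wellordering `r`):
`Y ≺ M`, `Y ∩ η = X ∩ η`, and `Y` is the Skolem hull of `X ∪ A` for some `A ⊆ λ`. -/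
def IsMinExt (M : ZFSet) (r : ZFSet → ZFSet → Prop) (η lam X Y : ZFSet) : Prop :=
  ElemSub M r Y ∧ Y ∩ η = X ∩ η ∧ ∃ A : ZFSet, A ⊆ lam ∧ Y.toSet = SkHull M lam X A

/-- `U` is a normal measure on the (measurable) cardinal `λ`. -/
def IsNormalMeasure (lam U : ZFSet) : Prop :=
  IsOrd lam ∧ IsUltraOn lam U ∧
  CompleteOn Set.univ (Cardinal.mk lam.toSet) lam U ∧
  (∀ x, x ∈ lam → ({x} : ZFSet) ∉ U) ∧
  ∀ f A, A ∈ U → ZFSet.IsFunc lam lam f →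
    (∀ x v, x ∈ A → ZFSet.pair x v ∈ f → (v ∈ x ∨ x = ∅)) →
    ∃ B c, B ∈ U ∧ ∀ x, x ∈ B → ZFSet.pair x c ∈ f

/-- `g` is the `ξ`-th ordinal of `M` (counting from `0`): the ordinals of `M` below `g`
have order type `ξ`. -/
def NthOrdOf (M : ZFSet) (ξ : Ordinal.{0}) (g : ZFSet) : Prop :=
  IsOrd g ∧ g ∈ M ∧
  IsOtypOf ξ (ZFSet.rank '' {x : ZFSet | x ∈ M.toSet ∧ IsOrd x ∧ x ∈ g})

/-- The relation `≤_o` on a tree `T` on `ω × ω₁`: one sequence extends the other, and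
the first coordinate of the last element of the longer one codes that the length of the
first is below the length of the second in the coded ordering.  (`decode k m n` means:
the value `k` codes `m` before `n`.) -/
def leO (T : Set (List ℕ × List Ordinal.{0})) (decode : ℕ → ℕ → ℕ → Prop)
    (p q : List ℕ × List Ordinal.{0}) : Prop :=
  p ∈ T ∧ q ∈ T ∧
  ((p.1 <+: q.1 ∧ p.2 <+: q.2 ∧ p.1.length < q.1.length ∧
      decode (q.1.getD (q.1.length - 1) 0) p.1.length q.1.length) ∨
   (q.1 <+: p.1 ∧ q.2 <+: p.2 ∧ q.1.length < p.1.length ∧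
      decode (p.1.getD (p.1.length - 1) 0) p.1.length q.1.length))

/-- The binary relation on `ω` coded by `x : ω → ω`:  comparisons of `n` with smaller
numbers are decided by `x (n - 1)`. -/
def codedRel (decode : ℕ → ℕ → ℕ → Prop) (x : ℕ → ℕ) (m n : ℕ) : Prop :=
  (m < n ∧ decode (x (n - 1)) m n) ∨ (n < m ∧ decode (x (m - 1)) m n)

/-
A point `y ∈ Y ∩ γ` outside `X` is `f(a)` for some `f ∈ X` defined on `[λ]^{<ω}`. At most
`|λ|` many (or finitely many) values of `f` lie below `γ`, so by regularity some `o < γ` bounds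
them all. That is a first-order property of `o` with parameters `f, γ ∈ X`, so elementarity
yields such an `o` in `X`, and then `y ∈ o`.
-/
open FirstOrder.Language Cardinal

theorem IsOrd.isOrdinal {x : ZFSet} (h : IsOrd x) : x.IsOrdinal :=
  isOrdinal_iff_forall_mem_isTransitive.2 h

theorem HerLt.mem {κ : Cardinal} {x z : ZFSet} (hx : HerLt κ x) (hz : z ∈ x) : HerLt κ z := by
  unfold HerLt at hx ⊢
  rw [WellFounded.fix_eq] at hx
  exact hx.2 z hz

theorem IsHCard.isTransitive {κ : Cardinal} {H : ZFSet} (hH : IsHCard κ H) : H.IsTransitive :=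
  fun _ hx _ hz => (hH _).2 (((hH _).1 hx).mem hz)

theorem mem_finPow {a x : ZFSet} : a ∈ finPow x ↔ a ⊆ x ∧ a.toSet.Finite := by
  rw [finPow, mem_sep, mem_powerset]

theorem mk_finPow_le (x : ZFSet) : #(finPow x).toSet ≤ #(Finset x.toSet) := by
  refine mk_le_of_injective (f := fun a : (finPow x).toSet =>
    ((mem_finPow.1 a.2).2.preimage Subtype.val_injective.injOn).toFinset) fun a b hab => ?_
  have hab' := Set.ext_iff.1 (Set.Finite.toFinset_inj.1 hab)
  refine Subtype.ext (ZFSet.ext fun z => ⟨fun hz => ?_, fun hz => ?_⟩)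
  · exact (hab' ⟨z, (mem_finPow.1 a.2).1 hz⟩).1 hz
  · exact (hab' ⟨z, (mem_finPow.1 b.2).1 hz⟩).2 hz

theorem mem_or_exists_pair_mem_of_mem_sUnion_sUnion {A B f w : ZFSet} (hf : f ⊆ prod A B)
    (hw : w ∈ ⋃₀ ⋃₀ f) : w ∈ A ∨ ∃ a, pair a w ∈ f := by
  obtain ⟨u, hu, hwu⟩ := mem_sUnion.1 hw
  obtain ⟨p, hp, hup⟩ := mem_sUnion.1 hu
  obtain ⟨a, ha, b, -, rfl⟩ := mem_prod.1 (hf hp)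
  rcases mem_pair.1 hup with rfl | rfl
  · exact Or.inl (mem_singleton.1 hwu ▸ ha)
  · rcases mem_pair.1 hwu with rfl | rfl
    exacts [Or.inl ha, Or.inr ⟨a, hp⟩]

theorem mem_sUnion_sUnion_of_pair_mem {a b f : ZFSet} (h : pair a b ∈ f) : b ∈ ⋃₀ ⋃₀ f :=
  mem_sUnion.2
    ⟨{a, b}, mem_sUnion.2 ⟨pair a b, h, mem_pair.2 (Or.inr rfl)⟩, mem_pair.2 (Or.inr rfl)⟩

theorem mk_setOf_pair_mem_le {A B f : ZFSet} (hf : IsFunc A B f) :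
    #{v | ∃ a, pair a v ∈ f} ≤ #A.toSet := by
  choose F hF using fun a : A.toSet => (hf.2 a a.2).exists
  refine (mk_le_mk_of_subset (t := Set.range F) ?_).trans mk_range_le
  rintro v ⟨a, hav⟩
  have ha : a ∈ A := (pair_mem_prod.1 (hf.1 hav)).1
  exact ⟨⟨a, ha⟩, (hf.2 a ha).unique (hF ⟨a, ha⟩) hav⟩

def BddIn (γ : ZFSet) (T : Set ZFSet) : Prop :=
  ∃ o ∈ γ, ∀ v ∈ T, v ∈ o

theorem BddIn.mono {γ : ZFSet} {S T : Set ZFSet} (hT : BddIn γ T) (hST : S ⊆ T) : BddIn γ S :=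
  let ⟨o, ho, hT⟩ := hT
  ⟨o, ho, fun v hv => hT v (hST hv)⟩

theorem BddIn.union {γ : ZFSet} {S T : Set ZFSet} (hγ : γ.IsOrdinal) (hS : BddIn γ S)
    (hT : BddIn γ T) : BddIn γ (S ∪ T) := by
  obtain ⟨o₁, ho₁, hS⟩ := hS
  obtain ⟨o₂, ho₂, hT⟩ := hT
  rcases (hγ.mem ho₁).mem_or_subset (hγ.mem ho₂) with h | h
  · exact ⟨o₂, ho₂, fun v hv => hv.elim (fun hv => (hγ.mem ho₂).mem_trans (hS v hv) h) (hT v)⟩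
  · exact ⟨o₁, ho₁, fun v hv => hv.elim (hS v) (fun hv => h (hT v hv))⟩

namespace IsRegOrd

variable {γ : ZFSet} (hγ : IsRegOrd γ)
include hγ

theorem isOrdinal : γ.IsOrdinal :=
  hγ.1.isOrdinal

theorem bddIn_singleton {v : ZFSet} (hv : v ∈ γ) : BddIn γ {v} := by
  obtain ⟨o, ho, hvo⟩ := hγ.2.1 v hv
  exact ⟨o, ho, fun _ h => h ▸ hvo⟩

theorem bddIn_of_finite {T : Set ZFSet} (hne : γ.toSet.Nonempty) (hT : T ⊆ γ.toSet)
    (hfin : T.Finite) : BddIn γ T := by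
  induction T, hfin using Set.Finite.induction_on with
  | empty =>
    obtain ⟨o, ho⟩ := hne
    exact ⟨o, ho, fun _ h => h.elim⟩
  | insert _ _ ih =>
    rw [Set.insert_eq]
    exact (hγ.bddIn_singleton (hT (Set.mem_insert _ _))).union hγ.isOrdinal
      (ih ((Set.subset_insert _ _).trans hT))

theorem bddIn_image {b : ZFSet} (hb : b ∈ γ) {F : ZFSet → ZFSet} (hF : ∀ z ∈ b, F z ∈ γ) :
    BddIn γ (F '' b.toSet) := by
  let _ : Definable₁ F := Classical.allZFSetDefinable _
  obtain ⟨o, ho, hbound⟩ := hγ.2.2 b (map F b) hb (map_isFunc.2 hF)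
  exact ⟨o, ho, fun _ ⟨z, hz, hzv⟩ => hbound z _ (hzv ▸ mem_map.2 ⟨z, hz, rfl⟩)⟩

theorem bddIn_of_mk_le {b : ZFSet} (hb : b ∈ γ) {T : Set ZFSet} (hT : T ⊆ γ.toSet)
    (h : #T ≤ #b.toSet) : BddIn γ T := by
  rcases T.eq_empty_or_nonempty with rfl | hne
  · exact ⟨b, hb, fun _ h => h.elim⟩
  obtain ⟨e⟩ := h
  have := hne.to_subtype
  let g : T → ZFSet := fun t => e t
  have hg : Function.Injective g := Subtype.val_injective.comp e.injective
  refine (hγ.bddIn_image hb fun z _ => hT (Function.invFun g z).2).mono fun t ht => ?_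
  exact ⟨g ⟨t, ht⟩, (e ⟨t, ht⟩).2, congrArg Subtype.val (Function.leftInverse_invFun hg ⟨t, ht⟩)⟩

theorem bddIn_of_mk_le_finset {b : ZFSet} (hb : b ∈ γ) {T : Set ZFSet} (hT : T ⊆ γ.toSet)
    (h : #T ≤ #(Finset b.toSet)) : BddIn γ T := by
  by_cases hfin : T.Finite
  · exact hγ.bddIn_of_finite ⟨b, hb⟩ hT hfin
  have : Infinite b.toSet := by
    by_contra hb
    have := not_infinite_iff_finite.1 hb
    exact hfin (lt_aleph0_iff_set_finite.1 (h.trans_lt (lt_aleph0_of_finite _)))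
  exact hγ.bddIn_of_mk_le hb hT (h.trans_eq (mk_finset_of_infinite _))

theorem bddIn_field_of_isFunc_finPow {lam B f : ZFSet} (hlam : lam ∈ γ)
    (hf : IsFunc (finPow lam) B f) : BddIn γ {w | w ∈ ⋃₀ ⋃₀ f ∧ w ∈ γ} := by
  let T : Set ZFSet := {w | w ∈ γ ∧ ∃ a, pair a w ∈ f}
  have hT : BddIn γ T := hγ.bddIn_of_mk_le_finset hlam (fun _ hw => hw.1)
    (((mk_le_mk_of_subset fun _ hw => hw.2).trans (mk_setOf_pair_mem_le hf)).trans
      (mk_finPow_le lam))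
  obtain ⟨o, ho, hbound⟩ := (hγ.bddIn_singleton hlam).union hγ.isOrdinal hT
  refine ⟨o, ho, fun w ⟨hw, hwγ⟩ => ?_⟩
  rcases mem_or_exists_pair_mem_of_mem_sUnion_sUnion hf.1 hw with hwA | ⟨a, ha⟩
  · exact (hγ.isOrdinal.mem hwγ).mem_of_subset_of_mem (hγ.isOrdinal.mem ho) (mem_finPow.1 hwA).1
      (hbound lam (Or.inl rfl))
  · exact hbound w (Or.inr ⟨hwγ, a, ha⟩)

end IsRegOrd

def memF {α : Type*} {n : ℕ} (t₁ t₂ : L.Term (α ⊕ Fin n)) : L.BoundedFormula α n :=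
  Relations.boundedFormula₂ (show L.Relations 2 from (0 : Fin 2)) t₁ t₂

theorem realize_memF {α : Type*} {n : ℕ} {M : ZFSet} {r : ZFSet → ZFSet → Prop}
    (t₁ t₂ : L.Term (α ⊕ Fin n)) (v : α → M.toSet) (xs : Fin n → M.toSet) :
    (letI := mStruc M r; (memF t₁ t₂).Realize v xs) ↔
      (letI := mStruc M r; ((t₁.realize (Sum.elim v xs) : M.toSet) : ZFSet) ∈
        ((t₂.realize (Sum.elim v xs) : M.toSet) : ZFSet)) := Iff.rfl

/-- `o ∈ γ ∧ ∀ p u w, p ∈ f → u ∈ p → w ∈ u → w ∈ γ → w ∈ o` with free variables `f, γ` and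
bound variable `o`: the chain `w ∈ u ∈ p ∈ f` runs over the field `⋃₀ ⋃₀ f` of the relation `f`,
which avoids coding ordered pairs in the language of `∈`. -/
def fieldBoundFormula : L.BoundedFormula (Fin 2) 1 :=
  memF &0 (var (Sum.inl 1)) ⊓
    ∀' ∀' ∀' ((memF &1 (var (Sum.inl 0)) ⊓ memF &2 &1 ⊓ memF &3 &2 ⊓ memF &3 (var (Sum.inl 1)))
      ⟹ memF &3 &0)

theorem realize_fieldBoundFormula {M : ZFSet} (r : ZFSet → ZFSet → Prop) (hM : M.IsTransitive)
    (f γ o : M.toSet) :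
    (letI := mStruc M r; fieldBoundFormula.Realize ![f, γ] ![o]) ↔
      (o : ZFSet) ∈ (γ : ZFSet) ∧ ∀ w ∈ ⋃₀ ⋃₀ (f : ZFSet), w ∈ (γ : ZFSet) → w ∈ (o : ZFSet) := by
  let _ := mStruc M r
  simp only [fieldBoundFormula, BoundedFormula.realize_inf, BoundedFormula.realize_all,
    BoundedFormula.realize_imp, realize_memF, Term.realize_var, Function.comp_apply, Sum.elim_inl,
    Sum.elim_inr, Matrix.cons_val_one, Matrix.cons_val_fin_one, Matrix.Fin.snoc_vecCons,
    Matrix.Fin.snoc_vecEmpty, Matrix.cons_val_zero, Matrix.cons_val, and_imp, Subtype.forall,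
    mem_sUnion, forall_exists_index, and_congr_right_iff]
  refine fun _ => ⟨fun h w u p hpf hup hwu => ?_, fun h p _ u _ w _ => h w u p⟩
  have hp := hM.mem_trans hpf f.2
  have hu := hM.mem_trans hup hp
  exact h p hp u hu w (hM.mem_trans hwu hu) hpf hup hwu

theorem _root_.FirstOrder.Language.ElementaryEmbedding.exists_realize_apply_of_realize
    {L : Language} {M N : Type*} [L.Structure M] [L.Structure N] (e : M ↪ₑ[L] N) {α : Type*}
    {ψ : L.BoundedFormula α 1} {v : α → M} {b : N} (h : ψ.Realize (e ∘ v) ![b]) :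
    ∃ a : M, ψ.Realize (e ∘ v) ![e a] := by
  have hN : Formula.Realize (∃' ψ) (e ∘ v) :=
    BoundedFormula.realize_ex.2 ⟨b, by convert h using 1; funext i; fin_cases i; rfl⟩
  obtain ⟨a, ha⟩ := BoundedFormula.realize_ex.1 ((e.map_formula (∃' ψ) v).1 hN)
  refine ⟨a, ?_⟩
  convert (e.map_boundedFormula ψ v _).2 ha using 1
  funext i; fin_cases i; rfl

def ElemSub.toElementaryEmbedding {M X : ZFSet} {r : ZFSet → ZFSet → Prop} (hX : ElemSub M r X) :
    @ElementaryEmbedding L X.toSet M.toSet (mStruc X r) (mStruc M r) :=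
  @ElementaryEmbedding.mk L X.toSet M.toSet (mStruc X r) (mStruc M r) (fun x => ⟨x, hX.1 x.2⟩)
    (fun n φ v => hX.2 n φ v)

theorem ElemSub.exists_mem_forall_mem_field {M X : ZFSet} {r : ZFSet → ZFSet → Prop}
    (hX : ElemSub M r X) (hM : M.IsTransitive) {f γ : ZFSet} (hf : f ∈ X) (hγ : γ ∈ X)
    (h : BddIn γ {w | w ∈ ⋃₀ ⋃₀ f ∧ w ∈ γ}) :
    ∃ o ∈ X, o ∈ γ ∧ ∀ w ∈ ⋃₀ ⋃₀ f, w ∈ γ → w ∈ o := by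
  let _ := mStruc X r
  let _ := mStruc M r
  let e := hX.toElementaryEmbedding
  obtain ⟨o, hoγ, ho⟩ := h
  have hv : e ∘ ![⟨f, hf⟩, ⟨γ, hγ⟩] = ![⟨f, hX.1 hf⟩, ⟨γ, hX.1 hγ⟩] := by
    ext i; fin_cases i <;> rfl
  obtain ⟨a, ha⟩ := e.exists_realize_apply_of_realize (ψ := fieldBoundFormula)
    (b := ⟨o, hM.mem_trans hoγ (hX.1 hγ)⟩) (by
      rw [hv, realize_fieldBoundFormula r hM]
      exact ⟨hoγ, fun w hw hwγ => ho w ⟨hw, hwγ⟩⟩)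
  rw [hv, realize_fieldBoundFormula r hM] at ha
  exact ⟨a, a.2, ha⟩

theorem stmt_3_general (χ : Cardinal.{1}) (Hs : ZFSet) (hH : IsHCard χ Hs)
    (r : ZFSet → ZFSet → Prop) (X lam gam η Y : ZFSet)
    (hX : ElemSub Hs r X) (hgam : gam ∈ X) (hgo : IsRegOrd gam)
    (hlg : lam ∈ gam) (hY : IsMinExt Hs r η lam X Y) :
    ∀ y, y ∈ Y → y ∈ gam → ∃ x, x ∈ X ∧ x ∈ gam ∧ (y = x ∨ y ∈ x) := by
  intro y hyY hyγ
  obtain ⟨-, -, A, -, hYeq⟩ := hY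
  have hy : y ∈ SkHull Hs lam X A := hYeq ▸ hyY
  rcases hy with hyX | ⟨f, hfX, hf, a, -, -, hay⟩
  · exact ⟨y, hyX, hyγ, Or.inl rfl⟩
  · obtain ⟨o, hoX, hoγ, ho⟩ := hX.exists_mem_forall_mem_field hH.isTransitive hfX hgam
      (hgo.bddIn_field_of_isFunc_finPow hlg hf)
    exact ⟨o, hoX, hoγ, Or.inr (ho y (mem_sUnion_sUnion_of_pair_mem hay) hyγ)⟩

theorem stmt_3 (χ : Cardinal.{1}) (hχ : χ.IsRegular) (Hs : ZFSet) (hH : IsHCard χ Hs)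
    (r : ZFSet → ZFSet → Prop) (hr : WOn Hs r) (X lam gam η Y : ZFSet)
    (hX : ElemSub Hs r X) (hXc : X.toSet.Countable)
    (hlam : lam ∈ X) (hgam : gam ∈ X) (hlo : IsOrd lam) (hgo : IsRegOrd gam)
    (hlg : lam ∈ gam) (hηo : IsOrd η) (hηl : η ∈ lam)
    (hY : IsMinExt Hs r η lam X Y) :
    ∀ y, y ∈ Y → y ∈ gam → ∃ x, x ∈ X ∧ x ∈ gam ∧ (y = x ∨ y ∈ x) :=
  stmt_3_general χ Hs hH r X lam gam η Y hX hgam hgo hlg hY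

end P746
end

section
/- If the nonstationary ideal on ω₁ is saturated, then every function from ω₁ to ω₁ is bounded on a club subset of ω₁ by a canonical function for an ordinal less than ω₂. -/
open ZFSet FirstOrder

namespace P746

/-!
The functions `g_γ(α) = otp(E_γ[α])`, for surjections `E_γ : ω₁ → γ`, are canonical for `γ < ω₂`:
they increase with `γ` modulo clubs, and Fodor's lemma gives their minimality. If `f : ω₁ → ω₁`
were bounded on a club by none of them, every `{α | g_δ(α) < f(α)}` would be stationary. Fixing
enumerations `e_α : ω → f(α)`, some `{α | e_α(k) = g_δ(α)}` is stationary, and one `k` serves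
`ℵ₂` many `δ`. As `g_δ < g_δ'` on a club for `δ < δ'`, these sets form an antichain of size `ℵ₂`
in `P(ω₁)/NS_{ω₁}`.
-/

open Ordinal Set

section Club

lemma countable_Iio_of_lt_omega1 {o : Ordinal} (ho : o < omega1) : (Iio o).Countable := by
  rw [← Cardinal.le_aleph0_iff_set_countable, Cardinal.mk_Iio_ordinal, Cardinal.lift_le_aleph0,
    ← Cardinal.lt_aleph_one_iff]
  exact Cardinal.lt_ord.1 ho

lemma iSup_lt_omega1 {ι : Type*} [Countable ι] {a : ι → Ordinal} (ha : ∀ i, a i < omega1) :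
    iSup a < omega1 := by
  refine Ordinal.lift_iSup_lt_of_lt_cof ?_ ha
  rw [omega1, Cardinal.lift_ord, Cardinal.isRegular_aleph_one.lift.cof_ord]
  exact (Cardinal.lift_le.2 (Cardinal.mk_le_aleph0 (α := ι))).trans_lt (by simp)

lemma succ_lt_omega1 {a : Ordinal} (h : a < omega1) : Order.succ a < omega1 :=
  (Cardinal.isSuccLimit_ord (Cardinal.aleph0_le_aleph 1)).succ_lt h

lemma isClub_Iio_omega1 : IsClub (Iio omega1) :=
  ⟨subset_rfl, fun _ ho _ _ => ho,
    fun b hb => ⟨Order.succ b, succ_lt_omega1 hb, Order.lt_succ b, succ_lt_omega1 hb⟩⟩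

lemma isClub_Ioi {x : Ordinal} (hx : x < omega1) : IsClub (Iio omega1 ∩ Ioi x) := by
  refine ⟨inter_subset_left, fun o ho hlim happ => ?_, fun b hb => ?_⟩
  · obtain ⟨c, hc, -, hco⟩ := happ 0 hlim.pos
    exact ⟨ho, hc.2.trans hco⟩
  · have hmax := succ_lt_omega1 (max_lt hb hx)
    exact ⟨_, ⟨hmax, (le_max_right b x).trans_lt (Order.lt_succ _)⟩,
      (le_max_left b x).trans_lt (Order.lt_succ _), hmax⟩

lemma exists_seq_of_forall_exists_step {Q : Ordinal → Ordinal → Prop}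
    (hQ : ∀ x < omega1, ∃ y, x < y ∧ y < omega1 ∧ Q x y) {b : Ordinal} (hb : b < omega1) :
    ∃ a : ℕ → Ordinal, StrictMono a ∧ a 0 = b ∧ (∀ n, Q (a n) (a (n + 1))) ∧
      (∀ n, a n < iSup a) ∧ iSup a < omega1 ∧ Order.IsSuccLimit (iSup a) := by
  choose! F hF_gt hF_lt hFQ using hQ
  let a : ℕ → Ordinal := fun n => F^[n] b
  have ha : ∀ n, a n < omega1 := fun n => by
    induction n with
    | zero => exact hb
    | succ n ih =>
      show F^[n + 1] b < omega1
      rw [Function.iterate_succ_apply']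
      exact hF_lt _ ih
  have hstep : ∀ n, a n < a (n + 1) ∧ Q (a n) (a (n + 1)) := fun n => by
    simp only [a, Function.iterate_succ_apply']
    exact ⟨hF_gt _ (ha n), hFQ _ (ha n)⟩
  have hmono : StrictMono a := strictMono_nat_of_lt_succ fun n => (hstep n).1
  have hlt : ∀ n, a n < iSup a :=
    fun n => (hmono n.lt_succ_self).trans_le (Ordinal.le_iSup a (n + 1))
  refine ⟨a, hmono, rfl, fun n => (hstep n).2, hlt, iSup_lt_omega1 ha,
    Ordinal.isSuccLimit_iff.2 ⟨(hlt 0).ne_bot, Order.isSuccPrelimit_of_succ_lt fun x hx => ?_⟩⟩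
  obtain ⟨n, hn⟩ := Ordinal.lt_iSup_iff.1 hx
  exact (Order.succ_le_of_lt hn).trans_lt (hlt n)

lemma IsClub.iInter {ι : Type*} [Countable ι] [Nonempty ι] {C : ι → Set Ordinal}
    (hC : ∀ i, IsClub (C i)) : IsClub (⋂ i, C i) := by
  refine ⟨(iInter_subset C (Classical.arbitrary ι)).trans (hC _).1,
    fun o ho hlim happ => mem_iInter.2 fun i => (hC i).2.1 o ho hlim fun b hb => ?_,
    fun b hb => ?_⟩
  · obtain ⟨c, hc, hbc, hco⟩ := happ b hb
    exact ⟨c, mem_iInter.1 hc i, hbc, hco⟩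
  · have hstep : ∀ x < omega1, ∃ y, x < y ∧ y < omega1 ∧ ∀ i, ∃ c ∈ C i, x < c ∧ c < y := by
      intro x hx
      choose c hcC hxc hc using fun i => (hC i).2.2 x hx
      have hsup := succ_lt_omega1 (iSup_lt_omega1 hc)
      obtain ⟨i⟩ := ‹Nonempty ι›
      refine ⟨_, (hxc i).trans_le ((Ordinal.le_iSup c i).trans (Order.le_succ _)), hsup,
        fun j => ⟨c j, hcC j, hxc j, (Ordinal.le_iSup c j).trans_lt (Order.lt_succ _)⟩⟩
    obtain ⟨a, -, rfl, hQ, ha, hsup, hlim⟩ := exists_seq_of_forall_exists_step hstep hb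
    refine ⟨iSup a, mem_iInter.2 fun i => (hC i).2.1 _ hsup hlim fun x hx => ?_, ha 0, hsup⟩
    obtain ⟨n, hn⟩ := Ordinal.lt_iSup_iff.1 hx
    obtain ⟨c, hc, hnc, hcn⟩ := hQ n i
    exact ⟨c, hc, hn.le.trans hnc.le, hcn.trans (ha (n + 1))⟩

lemma IsClub.inter {C D : Set Ordinal} (hC : IsClub C) (hD : IsClub D) : IsClub (C ∩ D) := by
  rw [inter_eq_iInter]
  exact IsClub.iInter fun b => by cases b <;> assumption

def diagInter (D : Ordinal → Set Ordinal) : Set Ordinal :=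
  {α | α < omega1 ∧ ∀ ξ < α, α ∈ D ξ}

lemma isClub_diagInter {D : Ordinal → Set Ordinal} (hD : ∀ ξ < omega1, IsClub (D ξ)) :
    IsClub (diagInter D) := by
  refine ⟨fun α hα => hα.1, fun o ho hlim happ => ⟨ho, fun ξ hξ => ?_⟩, fun b hb => ?_⟩
  · refine (hD ξ (hξ.trans ho)).2.1 o ho hlim fun b hb => ?_
    obtain ⟨c, hc, hbc, hco⟩ := happ _ (max_lt hb (hlim.succ_lt hξ))
    exact ⟨c, hc.2 ξ ((Order.lt_succ ξ).trans_le ((le_max_right _ _).trans hbc)),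
      (le_max_left _ _).trans hbc, hco⟩
  · have hstep : ∀ x < omega1, ∃ y, x < y ∧ y < omega1 ∧ ∀ ξ ≤ x, y ∈ D ξ := by
      intro x hx
      have hsucc := succ_lt_omega1 hx
      have := (countable_Iio_of_lt_omega1 hsucc).to_subtype
      have : Nonempty (Iio (Order.succ x)) := ⟨⟨x, Order.lt_succ x⟩⟩
      have hclub : IsClub (⋂ ξ : Iio (Order.succ x), D ξ) :=
        IsClub.iInter fun ξ => hD ξ (ξ.2.trans hsucc)
      obtain ⟨y, hy, hxy, hy1⟩ := hclub.2.2 x hx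
      exact ⟨y, hxy, hy1, fun ξ hξ => mem_iInter.1 hy ⟨ξ, Order.lt_succ_iff.2 hξ⟩⟩
    obtain ⟨a, hmono, rfl, hQ, ha, hsup, hlim⟩ := exists_seq_of_forall_exists_step hstep hb
    refine ⟨iSup a, ⟨hsup, fun ξ hξ => ?_⟩, ha 0, hsup⟩
    obtain ⟨n, hn⟩ := Ordinal.lt_iSup_iff.1 hξ
    refine (hD ξ (hξ.trans hsup)).2.1 _ hsup hlim fun x hx => ?_
    obtain ⟨m, hm⟩ := Ordinal.lt_iSup_iff.1 hx
    refine ⟨a (max n m + 1), hQ _ ξ (hn.le.trans (hmono.monotone (le_max_left n m))), ?_, ha _⟩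
    exact hm.le.trans ((hmono.monotone (le_max_right n m)).trans (hmono (max n m).lt_succ_self).le)

end Club

section Stationary

lemma not_isStat_iff {S : Set Ordinal} : ¬ IsStat S ↔ ∃ C, IsClub C ∧ S ∩ C = ∅ := by
  simp [IsStat, Set.nonempty_iff_ne_empty]

lemma IsStat.exists_isStat_of_subset_iUnion {S : Set Ordinal} {T : ℕ → Set Ordinal}
    (hS : IsStat S) (hST : S ⊆ ⋃ k, T k) : ∃ k, IsStat (T k) := by
  by_contra! h
  choose C hC hTC using fun k => not_isStat_iff.1 (h k)
  obtain ⟨α, hαS, hαC⟩ := hS _ (IsClub.iInter hC)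
  obtain ⟨k, hk⟩ := mem_iUnion.1 (hST hαS)
  exact (hTC k).subset ⟨hk, mem_iInter.1 hαC k⟩

/-- Fodor's lemma. -/
lemma IsStat.exists_isStat_fiber {S : Set Ordinal} (hS : IsStat S) {r : Ordinal → Ordinal}
    (hr : ∀ α ∈ S, r α < α) : ∃ ξ, IsStat {α ∈ S | r α = ξ} := by
  by_contra! h
  choose C hC hSC using fun ξ => not_isStat_iff.1 (h ξ)
  obtain ⟨α, hαS, hαC⟩ := hS _ (isClub_diagInter fun ξ _ => hC ξ)
  exact (hSC (r α)).subset ⟨⟨hαS, rfl⟩, hαC.2 _ (hr α hαS)⟩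

lemma isStat_lt_of_not_bddOnClub {f g : Ordinal → Ordinal} (h : ¬ BddOnClub f g) :
    IsStat {α | α < omega1 ∧ g α < f α} := by
  intro C hC
  by_contra hempty
  exact h ⟨C, hC, fun α hα => not_lt.1 fun hlt => hempty ⟨α, ⟨hC.1 hα, hlt⟩, hα⟩⟩

lemma LtOnClub.not_isStat_inter {g g' h : Ordinal → Ordinal} (hlt : LtOnClub g g') :
    ¬ IsStat ({α | h α = g α} ∩ {α | h α = g' α}) := by
  intro hS
  obtain ⟨C, hC, hgg'⟩ := hlt
  obtain ⟨α, ⟨hg, hg'⟩, hα⟩ := hS C hC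
  exact (hgg' α hα).ne (hg.symm.trans hg')

lemma BddOnClub.trans_ltOnClub {f g h : Ordinal → Ordinal} (hfg : BddOnClub f g)
    (hgh : LtOnClub g h) : LtOnClub f h := by
  obtain ⟨C, hC, hle⟩ := hfg
  obtain ⟨D, hD, hlt⟩ := hgh
  exact ⟨C ∩ D, hC.inter hD, fun α hα => (hle α hα.1).trans_lt (hlt α hα.2)⟩

end Stationary

section OrderType

local notation "ltOn " s:max => Subrel ((· < ·) : Ordinal → Ordinal → Prop) (· ∈ s)

/-- The order type of a set of ordinals, brought down from `Ordinal.{1}`; it is the junk value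
`0` unless `s` is bounded. -/
noncomputable def otp (s : Set Ordinal.{0}) : Ordinal.{0} :=
  open Classical in
  if h : ∃ o : Ordinal.{0}, lift.{1} o = type (ltOn s) then h.choose else 0

variable {u : Set Ordinal.{0}} {t : Ordinal.{0}}

lemma lift_otp (hu : u ⊆ Iio t) : lift.{1} (otp u) = type (ltOn u) := by
  have hle : type (ltOn u) ≤ lift.{1} t := by
    have emb : ltOn u ↪r Subrel ((· < ·) : Ordinal → Ordinal → Prop) (· < t) :=
      ⟨⟨inclusion hu, inclusion_injective hu⟩, Iff.rfl⟩
    have h := emb.ordinal_type_le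
    rwa [type_subrel, typein_ordinal] at h
  obtain ⟨o, ho⟩ := mem_range_lift_of_le hle
  have hex : ∃ o : Ordinal.{0}, lift.{1} o = type (ltOn u) := ⟨o, ho⟩
  rw [otp, dif_pos hex]
  exact hex.choose_spec

lemma type_inter_Iio_eq_typein {x : Ordinal} (hx : x ∈ u) :
    type (ltOn (u ∩ Iio x)) = typein (ltOn u) ⟨x, hx⟩ := by
  rw [← type_subrel]
  exact type_eq.2 ⟨⟨⟨fun p => ⟨⟨p.1, p.2.1⟩, p.2.2⟩, fun q => ⟨q.1.1, ⟨q.1.2, q.2⟩⟩,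
    fun _ => rfl, fun _ => rfl⟩, Iff.rfl⟩⟩

lemma otp_inter_Iio_lt (hu : u ⊆ Iio t) {x : Ordinal} (hx : x ∈ u) :
    otp (u ∩ Iio x) < otp u := by
  rw [← lift_lt.{1}, lift_otp (inter_subset_left.trans hu), lift_otp hu,
    type_inter_Iio_eq_typein hx]
  exact typein_lt_type _ _

lemma exists_otp_inter_Iio_eq (hu : u ⊆ Iio t) {o : Ordinal} (ho : o < otp u) :
    ∃ x ∈ u, otp (u ∩ Iio x) = o := by
  have hlt : lift.{1} o < type (ltOn u) := by
    rw [← lift_otp hu]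
    exact lift_lt.2 ho
  obtain ⟨x, hx⟩ := typein_surj _ hlt
  refine ⟨x.1, x.2, lift_inj.1 ?_⟩
  rw [lift_otp (inter_subset_left.trans hu), type_inter_Iio_eq_typein x.2]
  exact hx

end OrderType

section CanonicalFunction

lemma aleph_two_eq_succ : Cardinal.aleph 2 = Order.succ (Cardinal.aleph 1) := by
  rw [Cardinal.succ_aleph, one_add_one_eq_two]

lemma exists_surjOn_Iio_omega1 (γ : Ordinal) :
    ∃ E : Ordinal → Ordinal, γ < omega2 → SurjOn E (Iio omega1) (Iio γ) := by
  by_cases hγ : γ < omega2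
  swap
  · exact ⟨id, fun h => absurd h hγ⟩
  have hcard : Cardinal.mk (Iio γ) ≤ Cardinal.mk (Iio omega1) := by
    rw [Cardinal.mk_Iio_ordinal, Cardinal.mk_Iio_ordinal, Cardinal.lift_le, omega1,
      Cardinal.card_ord, ← Order.lt_succ_iff, ← aleph_two_eq_succ]
    exact Cardinal.lt_ord.1 hγ
  obtain ⟨f⟩ := hcard
  let g : Ordinal → Ordinal := fun x => if h : x < γ then f ⟨x, h⟩ else 0
  have hg : ∀ x (hx : x < γ), g x = f ⟨x, hx⟩ := fun x hx => dif_pos hx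
  have hinj : InjOn g (Iio γ) := fun x hx y hy hxy => by
    rw [hg x hx, hg y hy] at hxy
    exact congrArg Subtype.val (f.injective (Subtype.ext hxy))
  have hmaps : MapsTo g (Iio γ) (Iio omega1) := fun x hx => by
    rw [hg x hx]
    exact (f ⟨x, hx⟩).2
  exact ⟨Function.invFunOn g (Iio γ), fun _ => hinj.leftInvOn_invFunOn.surjOn hmaps⟩

noncomputable def omega1Enum (γ : Ordinal) : Ordinal → Ordinal :=
  (exists_surjOn_Iio_omega1 γ).choose

lemma surjOn_omega1Enum {γ : Ordinal} (hγ : γ < omega2) :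
    SurjOn (omega1Enum γ) (Iio omega1) (Iio γ) :=
  (exists_surjOn_Iio_omega1 γ).choose_spec hγ

/-- `g_γ(α)`: the order type of the part of `γ` enumerated before stage `α`. Intersecting with
`Iio γ` discards the junk values of `omega1Enum γ`. -/
noncomputable def canonicalFn (γ α : Ordinal) : Ordinal :=
  otp (omega1Enum γ '' Iio α ∩ Iio γ)

lemma exists_club_forall_lt_exists_lt {P : Ordinal → Ordinal → Prop}
    (h : ∀ ξ < omega1, ∃ η < omega1, P ξ η) :
    ∃ C, IsClub C ∧ ∀ α ∈ C, ∀ ξ < α, ∃ η < α, P ξ η := by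
  choose! η hη hP using h
  exact ⟨diagInter fun ξ => Iio omega1 ∩ Ioi (η ξ),
    isClub_diagInter fun ξ hξ => isClub_Ioi (hη ξ hξ),
    fun α hα ξ hξ => ⟨η ξ, (hα.2 ξ hξ).2, hP ξ (hξ.trans hα.1)⟩⟩

lemma exists_club_image_inter_Iio_subset {E E' : Ordinal → Ordinal} {β : Ordinal}
    (hE' : SurjOn E' (Iio omega1) (Iio β)) :
    ∃ C, IsClub C ∧ ∀ α ∈ C, E '' Iio α ∩ Iio β ⊆ E' '' Iio α := by
  obtain ⟨C, hC, hclosed⟩ := exists_club_forall_lt_exists_lt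
    (P := fun ξ η => E ξ < β → E' η = E ξ) fun ξ hξ => by
      by_cases hlt : E ξ < β
      · obtain ⟨η, hη, he⟩ := hE' hlt
        exact ⟨η, hη, fun _ => he⟩
      · exact ⟨ξ, hξ, fun h => absurd h hlt⟩
  refine ⟨C, hC, fun α hα => ?_⟩
  rintro _ ⟨⟨ξ, hξ, rfl⟩, hlt⟩
  obtain ⟨η, hη, he⟩ := hclosed α hα ξ hξ
  exact ⟨η, hη, he hlt⟩

lemma exists_club_image_inter_Iio_eq {β γ : Ordinal} (hβγ : β < γ) (hγ : γ < omega2) :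
    ∃ C, IsClub C ∧ ∀ α ∈ C, omega1Enum γ '' Iio α ∩ Iio β = omega1Enum β '' Iio α ∩ Iio β ∧
      β ∈ omega1Enum γ '' Iio α := by
  have hEγ := surjOn_omega1Enum hγ
  obtain ⟨C₁, hC₁, h₁⟩ :=
    exists_club_image_inter_Iio_subset (E := omega1Enum γ) (surjOn_omega1Enum (hβγ.trans hγ))
  obtain ⟨C₂, hC₂, h₂⟩ := exists_club_image_inter_Iio_subset (E := omega1Enum β)
    (hEγ.mono subset_rfl (Iio_subset_Iio hβγ.le))
  obtain ⟨ξ, hξ, hEξ⟩ := hEγ hβγ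
  refine ⟨C₁ ∩ C₂ ∩ (Iio omega1 ∩ Ioi ξ), (hC₁.inter hC₂).inter (isClub_Ioi hξ), ?_⟩
  rintro α ⟨⟨hα₁, hα₂⟩, -, hξα⟩
  exact ⟨(subset_inter (h₁ α hα₁) inter_subset_right).antisymm
    (subset_inter (h₂ α hα₂) inter_subset_right), ξ, hξα, hEξ⟩

lemma canonicalFn_ltOnClub {β γ : Ordinal} (hβγ : β < γ) (hγ : γ < omega2) :
    LtOnClub (canonicalFn β) (canonicalFn γ) := by
  obtain ⟨C, hC, hcoh⟩ := exists_club_image_inter_Iio_eq hβγ hγ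
  refine ⟨C, hC, fun α hα => ?_⟩
  obtain ⟨heq, hβ⟩ := hcoh α hα
  calc canonicalFn β α = otp ((omega1Enum γ '' Iio α ∩ Iio γ) ∩ Iio β) := by
        rw [canonicalFn, ← heq, inter_assoc, Iio_inter_Iio, min_eq_right hβγ.le]
    _ < canonicalFn γ α := otp_inter_Iio_lt inter_subset_right ⟨hβ, hβγ⟩

/-- If `h` lay below `g_γ` on a stationary set, then there `h(α)` would be the order type of an
initial segment of `γ`'s enumeration cut at some `β < γ`; Fodor fixes `β` on a stationary set,
where coherence turns `h` into `g_β`, contradicting `g_β < h`. -/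
lemma canonicalFn_bddOnClub {γ : Ordinal} {h : Ordinal → Ordinal} (hγ : γ < omega2)
    (hh : ∀ β < γ, LtOnClub (canonicalFn β) h) : BddOnClub (canonicalFn γ) h := by
  by_contra hnot
  have hcut : ∀ α ∈ {α | α < omega1 ∧ h α < canonicalFn γ α}, ∃ ξ < α,
      omega1Enum γ ξ < γ ∧ h α = otp (omega1Enum γ '' Iio α ∩ Iio (omega1Enum γ ξ)) := by
    rintro α ⟨-, hlt⟩
    obtain ⟨_, ⟨⟨ξ, hξ, rfl⟩, hξγ⟩, hotp⟩ := exists_otp_inter_Iio_eq inter_subset_right hlt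
    refine ⟨ξ, hξ, hξγ, ?_⟩
    rw [← hotp, inter_assoc, Iio_inter_Iio, min_eq_right hξγ.le]
  choose! r hr_lt hr_γ hr using hcut
  obtain ⟨ξ, hfib⟩ := (isStat_lt_of_not_bddOnClub hnot).exists_isStat_fiber hr_lt
  obtain ⟨α₀, ⟨hα₀, rfl⟩, -⟩ := hfib _ isClub_Iio_omega1
  have hβ := hr_γ α₀ hα₀
  obtain ⟨C, hC, hcoh⟩ := exists_club_image_inter_Iio_eq hβ hγ
  obtain ⟨D, hD, hlt⟩ := hh _ hβ
  obtain ⟨α, ⟨hα, hrα⟩, hαC, hαD⟩ := hfib _ (hC.inter hD)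
  refine (hlt α hαD).ne ?_
  rw [hr α hα, hrα, (hcoh α hαC).1, canonicalFn]

lemma canonical_iff (γ : Ordinal) (f : Ordinal → Ordinal) :
    Canonical γ f ↔ (∀ β < γ, ∀ g, Canonical β g → LtOnClub g f) ∧
      ∀ h, (∀ β < γ, ∀ g, Canonical β g → LtOnClub g h) → BddOnClub f h := by
  rw [Canonical, WellFounded.fix_eq]

theorem canonical_canonicalFn {γ : Ordinal} (hγ : γ < omega2) :
    Canonical γ (canonicalFn γ) := by
  induction γ using WellFoundedLT.induction with
  | _ γ IH =>
  have hIH : ∀ β < γ, Canonical β (canonicalFn β) := fun β hβ => IH β hβ (hβ.trans hγ)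
  have hbelow : ∀ β < γ, ∀ g, Canonical β g → BddOnClub g (canonicalFn β) := fun β hβ g hg =>
    ((canonical_iff β g).1 hg).2 _ ((canonical_iff β _).1 (hIH β hβ)).1
  exact (canonical_iff γ _).2
    ⟨fun β hβ g hg => (hbelow β hβ g hg).trans_ltOnClub (canonicalFn_ltOnClub hβ hγ),
      fun h hh => canonicalFn_bddOnClub hγ fun β hβ => hh β hβ _ (hIH β hβ)⟩

end CanonicalFunction

lemma exists_injOn_fiber (c : Ordinal → ℕ) : ∃ k, ∃ ι : Ordinal → Ordinal,
    InjOn ι (Iio omega2) ∧ MapsTo ι (Iio omega2) {δ | δ < omega2 ∧ c δ = k} := by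
  have hcard : Cardinal.mk (Iio omega2) = Cardinal.lift.{1, 0} (Cardinal.aleph 2) := by
    rw [Cardinal.mk_Iio_ordinal, omega2, Cardinal.card_ord]
  have hreg : (Cardinal.mk (Iio omega2)).IsRegular := by
    rw [hcard, ← one_add_one_eq_two]
    exact (Cardinal.isRegular_aleph_add_one 1).lift
  obtain ⟨k, hk⟩ := Cardinal.infinite_pigeonhole_card (fun δ : Iio omega2 => ULift.up.{1} (c δ))
    _ le_rfl hreg.aleph0_le (by rw [hreg.cof_ord, hcard]; simp)
  obtain ⟨emb⟩ := hk
  let ι : Ordinal → Ordinal := fun i => if h : i < omega2 then (emb ⟨i, h⟩).1.1 else 0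
  have hι : ∀ i (hi : i < omega2), ι i = (emb ⟨i, hi⟩).1.1 := fun i hi => dif_pos hi
  refine ⟨k.down, ι, fun i hi j hj hij => ?_, fun i hi => ?_⟩
  · rw [hι i hi, hι j hj] at hij
    exact congrArg Subtype.val (emb.injective (Subtype.ext (Subtype.ext hij)))
  · rw [hι i hi]
    exact ⟨(emb ⟨i, hi⟩).1.2, congrArg ULift.down (emb ⟨i, hi⟩).2⟩

theorem stmt_8
    (hsat : ¬ ∃ S : Ordinal.{0} → Set Ordinal.{0},
      (∀ i, i < omega2 → IsStat (S i)) ∧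
      ∀ i j, i < j → j < omega2 → ¬ IsStat (S i ∩ S j)) :
    Bounding := by
  intro f hf
  by_contra! hunbdd
  choose! e he using fun α (hα : α < omega1) =>
    countable_iff_exists_subset_range.1 (countable_Iio_of_lt_omega1 (hf α hα))
  have hstat : ∀ δ < omega2, ∃ k, IsStat {α | e α k = canonicalFn δ α} := fun δ hδ =>
    IsStat.exists_isStat_of_subset_iUnion
      (isStat_lt_of_not_bddOnClub (hunbdd δ hδ _ (canonical_canonicalFn hδ)))
      fun α ⟨hα, hlt⟩ => mem_iUnion.2 (he α hα hlt)
  choose! k hk using hstat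
  obtain ⟨n, ι, hinj, hmaps⟩ := exists_injOn_fiber k
  refine hsat ⟨fun i => {α | e α n = canonicalFn (ι i) α}, fun i hi => ?_, fun i j hij hj => ?_⟩
  · obtain ⟨hιi, hki⟩ := hmaps hi
    simpa only [hki] using hk _ hιi
  · have hne := hinj.ne (hij.trans hj) hj hij.ne
    rcases hne.lt_or_gt with hlt | hlt
    · exact (canonicalFn_ltOnClub hlt (hmaps hj).1).not_isStat_inter
    · rw [inter_comm]
      exact (canonicalFn_ltOnClub hlt (hmaps (hij.trans hj)).1).not_isStat_inter

end P746
end
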